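/- Let $t > 0$, $c_1, c_2 \in \mathbb{R}$ with $c_2 \neq 0$, and $x \in \mathbb{R}$ with $c_1 + c_2 x \neq 0$. Define $\overline{X}^{x}_t := -\frac{c_1}{c_2} + \big(\frac{c_1}{c_2} + x\big)\exp\big(-\frac{c_2^2}{2}t + c_2 W_t\big)$ where $W_t \sim \mathcal{N}(0,t)$. Then for every bounded continuous function $\phi: \mathbb{R} \to \mathbb{R}$, the map $x \mapsto \mathbb{E}[\phi(\overline{X}^x_t)]$ is differentiable and $\frac{d}{dx}\,\mathbb{E}\big[\phi(\overline{X}^{x}_t)\big] = \mathbb{E}\Big[\phi(\overline{X}^{x}_t)\,\frac{1}{c_1 + c_2 x}\,\frac{W_t}{t}\Big]$. -/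

import Mathlib

/-!
Moving the initial point of the shifted geometric Brownian motion from `x` to `y` amounts to
shifting the Gaussian noise: `X̄^y_t(w) = X̄^x_t(w + s(y))` with
`s(y) = c₂⁻¹ log ((c₁ + c₂ y) / (c₁ + c₂ x))`, valid for `y` near `x`. Hence
`E[φ(X̄^y_t)]` is the expectation of `φ ∘ X̄^x_t` under `N(s(y), t)`. Differentiating a Gaussian
expectation in its mean brings down the score `(W_t - μ) / t` (dominated convergence, `φ` being
bounded), and the chain rule contributes `s'(x) = 1 / (c₁ + c₂ x)`.
-/

open MeasureTheory ProbabilityTheory Real Filter Topology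
open scoped NNReal

namespace ProbabilityTheory

variable {v : ℝ≥0}

lemma hasDerivAt_gaussianPDFReal_mean (x μ : ℝ) :
    HasDerivAt (fun m ↦ gaussianPDFReal m v x) ((x - μ) / v * gaussianPDFReal μ v x) μ := by
  have h : HasDerivAt (fun m : ℝ ↦ -(x - m) ^ 2 / (2 * v)) ((x - μ) / v) μ := by
    refine ((((hasDerivAt_id μ).const_sub x).pow 2).neg.div_const (2 * (v : ℝ))).congr_deriv ?_
    simp only [id]; ring
  simp_rw [gaussianPDFReal_def]
  exact (h.exp.const_mul _).congr_deriv (by ring)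

lemma abs_sub_div_mul_gaussianPDFReal_le (hv : v ≠ 0) {μ μ₀ : ℝ} (hμ : |μ - μ₀| ≤ 1) (x : ℝ) :
    |x - μ| / v * gaussianPDFReal μ v x ≤ (√(2 * π * v))⁻¹ * rexp (1 / (2 * v)) / v *
      ((|x - μ₀| + 1) * rexp (-(4 * (v : ℝ))⁻¹ * (x - μ₀) ^ 2)) := by
  have hv' : (0 : ℝ) < v := by positivity
  have hx : |x - μ| ≤ |x - μ₀| + 1 := by
    have := abs_sub_le x μ₀ μ
    rw [abs_sub_comm μ₀] at this
    linarith
  have hexp : -(x - μ) ^ 2 / (2 * v) ≤ 1 / (2 * v) + -(4 * (v : ℝ))⁻¹ * (x - μ₀) ^ 2 := by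
    -- `(x - μ)² ≥ (x - μ₀)² / 2 - (μ - μ₀)²`
    have : (μ - μ₀) ^ 2 ≤ 1 := by nlinarith [abs_nonneg (μ - μ₀), sq_abs (μ - μ₀)]
    field_simp
    nlinarith [sq_nonneg (x - μ₀ - 2 * (μ - μ₀))]
  calc |x - μ| / v * gaussianPDFReal μ v x
      ≤ (|x - μ₀| + 1) / v *
          ((√(2 * π * v))⁻¹ * rexp (1 / (2 * v) + -(4 * (v : ℝ))⁻¹ * (x - μ₀) ^ 2)) := by
        rw [gaussianPDFReal]
        gcongr
    _ = _ := by rw [exp_add]; ring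

lemma integrable_abs_add_one_mul_exp_neg_mul_sq {b : ℝ} (hb : 0 < b) :
    Integrable fun x : ℝ ↦ (|x| + 1) * rexp (-b * x ^ 2) := by
  have h_abs : Integrable fun x : ℝ ↦ |x| * rexp (-b * x ^ 2) :=
    (integrable_mul_exp_neg_mul_sq hb).abs.congr
      (ae_of_all _ fun x ↦ by simp [abs_mul, abs_of_pos (exp_pos _)])
  exact (h_abs.add (integrable_exp_neg_mul_sq hb)).congr
    (ae_of_all _ fun x ↦ by simp only [Pi.add_apply]; ring)

theorem hasDerivAt_integral_gaussianReal_mean (hv : v ≠ 0) {ψ : ℝ → ℝ}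
    (hψ : AEStronglyMeasurable ψ) {M : ℝ} (hM : ∀ x, |ψ x| ≤ M) (μ₀ : ℝ) :
    HasDerivAt (fun μ ↦ ∫ x, ψ x ∂gaussianReal μ v)
      (∫ x, ψ x * ((x - μ₀) / v) ∂gaussianReal μ₀ v) μ₀ := by
  simp_rw [integral_gaussianReal_eq_integral_smul hv, smul_eq_mul]
  set C := (√(2 * π * v))⁻¹ * rexp (1 / (2 * v))
  have hpdf_cont : ∀ μ, Continuous (gaussianPDFReal μ v) := fun μ ↦ by
    rw [gaussianPDFReal_def]; fun_prop
  have hF'_le : ∀ x, ∀ μ ∈ Metric.ball μ₀ 1,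
      ‖(x - μ) / v * gaussianPDFReal μ v x * ψ x‖ ≤
        C / v * ((|x - μ₀| + 1) * rexp (-(4 * (v : ℝ))⁻¹ * (x - μ₀) ^ 2)) * M := by
    intro x μ hμ
    simp only [norm_mul, norm_div, Real.norm_eq_abs, NNReal.abs_eq,
      abs_of_nonneg (gaussianPDFReal_nonneg _ _ _)]
    exact mul_le_mul (abs_sub_div_mul_gaussianPDFReal_le hv (mem_ball_iff_norm.mp hμ).le x) (hM x)
      (abs_nonneg _) (by positivity)
  have hderiv := hasDerivAt_integral_of_dominated_loc_of_deriv_le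
    (F := fun μ x ↦ gaussianPDFReal μ v x * ψ x)
    (Metric.ball_mem_nhds μ₀ one_pos)
    (Eventually.of_forall fun μ ↦ (hpdf_cont μ).aestronglyMeasurable.mul hψ)
    ((integrable_gaussianPDFReal μ₀ v).mul_bdd hψ (ae_of_all _ hM))
    ((by fun_prop : Continuous fun x : ℝ ↦ (x - μ₀) / v).aestronglyMeasurable.mul
      (hpdf_cont μ₀).aestronglyMeasurable |>.mul hψ)
    (ae_of_all _ hF'_le)
    ((((integrable_abs_add_one_mul_exp_neg_mul_sq (by positivity)).comp_sub_right μ₀).const_mul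
      _).mul_const _)
    (ae_of_all _ fun x μ _ ↦ (hasDerivAt_gaussianPDFReal_mean x μ).mul_const (ψ x))
  refine hderiv.2.congr_deriv (integral_congr_ae (ae_of_all _ fun x ↦ ?_))
  ring

lemma integral_gaussianReal_comp_add {E : Type*} [NormedAddCommGroup E] [NormedSpace ℝ E]
    (f : ℝ → E) (μ r : ℝ) :
    ∫ x, f (x + r) ∂gaussianReal μ v = ∫ x, f x ∂gaussianReal (μ + r) v := by
  rw [← gaussianReal_map_add_const r]
  exact ((MeasurableEquiv.addRight r).measurableEmbedding.integral_map f).symm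

end ProbabilityTheory

/-- `lognormalFlow c₁ c₂ t y w` is `X̄^y_t` on the event `W_t = w`. -/
noncomputable def lognormalFlow (c₁ c₂ t y w : ℝ) : ℝ :=
  -(c₁ / c₂) + (c₁ / c₂ + y) * rexp (-(c₂ ^ 2 / 2) * t + c₂ * w)

noncomputable def noiseShift (c₁ c₂ x y : ℝ) : ℝ :=
  c₂⁻¹ * log ((c₁ + c₂ * y) / (c₁ + c₂ * x))

section Lognormal

variable {c₁ c₂ x : ℝ}

@[simp]
lemma noiseShift_self (c₁ c₂ x : ℝ) : noiseShift c₁ c₂ x x = 0 := by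
  simp [noiseShift]

lemma hasDerivAt_noiseShift (hc₂ : c₂ ≠ 0) (hx : c₁ + c₂ * x ≠ 0) :
    HasDerivAt (noiseShift c₁ c₂ x) (1 / (c₁ + c₂ * x)) x := by
  have h : HasDerivAt (fun y ↦ (c₁ + c₂ * y) / (c₁ + c₂ * x)) (c₂ / (c₁ + c₂ * x)) x := by
    simpa using (((hasDerivAt_id x).const_mul c₂).const_add c₁).div_const (c₁ + c₂ * x)
  refine ((h.log (by simp [hx])).const_mul c₂⁻¹).congr_deriv ?_
  field_simp

lemma lognormalFlow_eq_shift {y : ℝ} (hc₂ : c₂ ≠ 0) (hy : 0 < (c₁ + c₂ * y) / (c₁ + c₂ * x))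
    (t w : ℝ) :
    lognormalFlow c₁ c₂ t y w = lognormalFlow c₁ c₂ t x (w + noiseShift c₁ c₂ x y) := by
  have hx : c₁ + c₂ * x ≠ 0 := by rintro h; simp [h] at hy
  rw [lognormalFlow, lognormalFlow, noiseShift, mul_add, mul_inv_cancel_left₀ hc₂, ← add_assoc,
    exp_add _ (log _), exp_log hy]
  field_simp

lemma eventually_lognormalFlow_eq_shift (hc₂ : c₂ ≠ 0) (hx : c₁ + c₂ * x ≠ 0) (t : ℝ) :
    ∀ᶠ y in 𝓝 x, ∀ w, lognormalFlow c₁ c₂ t y w =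
      lognormalFlow c₁ c₂ t x (w + noiseShift c₁ c₂ x y) := by
  have hcont : Continuous fun y ↦ (c₁ + c₂ * y) / (c₁ + c₂ * x) := by fun_prop
  have hpos : ∀ᶠ y in 𝓝 x, 0 < (c₁ + c₂ * y) / (c₁ + c₂ * x) :=
    continuousAt_const.eventually_lt hcont.continuousAt (by rw [div_self hx]; exact one_pos)
  filter_upwards [hpos] with y hy
  exact lognormalFlow_eq_shift hc₂ hy t

end Lognormal

/-- Automatic differentiation weight for log-normal dynamics: with
`X̄ˣ_t = -c₁/c₂ + (c₁/c₂ + x) exp(-c₂²t/2 + c₂ W_t)` and `W_t ∼ N(0,t)`,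
for bounded continuous `φ`,
`d/dx E[φ(X̄ˣ_t)] = E[φ(X̄ˣ_t) (1/(c₁+c₂x)) (W_t/t)]`. -/
theorem lognormal_ibp_first_order
    (t c1 c2 x : ℝ) (ht : 0 < t) (hc2 : c2 ≠ 0) (hx : c1 + c2 * x ≠ 0)
    (φ : ℝ → ℝ) (hφc : Continuous φ) (hφb : ∃ M, ∀ y, |φ y| ≤ M)
    (X : ℝ → ℝ → ℝ)
    (hX : ∀ y w, X y w = -(c1 / c2) + (c1 / c2 + y) * Real.exp (-(c2 ^ 2 / 2) * t + c2 * w)) :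
    HasDerivAt (fun y => ∫ w, φ (X y w) ∂(gaussianReal 0 ⟨t, ht.le⟩))
      (∫ w, φ (X x w) * (1 / (c1 + c2 * x)) * (w / t) ∂(gaussianReal 0 ⟨t, ht.le⟩)) x := by
  obtain ⟨M, hM⟩ := hφb
  obtain rfl : X = lognormalFlow c1 c2 t := funext₂ hX
  set v : ℝ≥0 := ⟨t, ht.le⟩
  have hv : v ≠ 0 := ne_of_gt ht
  have hψ : Continuous (φ ∘ lognormalFlow c1 c2 t x) := hφc.comp (by unfold lognormalFlow; fun_prop)
  have hmean := hasDerivAt_integral_gaussianReal_mean hv hψ.aestronglyMeasurable (fun w ↦ hM _)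
    (noiseShift c1 c2 x x)
  refine ((hmean.comp x (hasDerivAt_noiseShift hc2 hx)).congr_of_eventuallyEq ?_).congr_deriv ?_
  · filter_upwards [eventually_lognormalFlow_eq_shift hc2 hx t] with y hy
    simp only [Function.comp_apply, hy]
    rw [integral_gaussianReal_comp_add (fun w ↦ φ (lognormalFlow c1 c2 t x w)), zero_add]
  · simp only [noiseShift_self, sub_zero, Function.comp_apply, ← integral_mul_const]
    congr 1; ext w
    rw [show (v : ℝ) = t from rfl]
    ring
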